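/- Let d₀, d_∞ ∈ ℕ, let x ∈ (−1,1) with x ≠ 0, and let s ∈ ℝ satisfy s ≤ 3 if x > 0 and s ≥ −3 if x < 0. Then d(x) > 0 and n(s,x) ≠ 0; more precisely n(s,x) has the opposite sign to x³ (equivalently, the bracketed expression in the definition of n(s,x) is positive). -/
import Mathlib


/-- The denominator `d(x)` of the leading coefficient of the extremal polynomial
over a CSC Hodge 4-manifold. -/
noncomputable def dDen (d₀ d₁ : ℕ) (x : ℝ) : ℝ :=
  (1 + (d₁ : ℝ)) * (2 + (d₁ : ℝ)) ^ 2 * (3 + (d₁ : ℝ)) * (1 - x) ^ 4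
  + 4 * (2 + (d₀ : ℝ)) * (1 + (d₁ : ℝ)) * (2 + (d₁ : ℝ)) * (3 + (d₁ : ℝ)) *
      (1 - x) ^ 3 * (1 + x)
  + 6 * (2 + (d₀ : ℝ)) * (2 + (d₁ : ℝ)) *
      (4 + (d₀ : ℝ) + (d₁ : ℝ) + (1 + (d₀ : ℝ)) * (1 + (d₁ : ℝ))) *
      (1 - x) ^ 2 * (1 + x) ^ 2
  + 4 * (1 + (d₀ : ℝ)) * (2 + (d₀ : ℝ)) * (3 + (d₀ : ℝ)) * (2 + (d₁ : ℝ)) *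
      (1 - x) * (1 + x) ^ 3
  + (1 + (d₀ : ℝ)) * (2 + (d₀ : ℝ)) ^ 2 * (3 + (d₀ : ℝ)) * (1 + x) ^ 4

/-- The bracketed expression in the numerator `n(s,x)`. -/
noncomputable def nBracket (d₀ d₁ : ℕ) (s x : ℝ) : ℝ :=
  4 * (6 - 3 * s * x + s * x ^ 3)
  + (d₀ : ℝ) * (1 + x) * ((5 - x) * (1 + x) + (7 - x) * (3 - s * x))
  + (d₁ : ℝ) * (1 - x) * ((5 + x) * (1 - x) + (7 + x) * (3 - s * x))
  + (9 - s * x) * ((d₀ : ℝ) * (1 + x) + (d₁ : ℝ) * (1 - x)) ^ 2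
  + ((d₀ : ℝ) * (1 + x) + (d₁ : ℝ) * (1 - x)) ^ 3

/-- The numerator `n(s,x)` of the leading coefficient of the extremal polynomial. -/
noncomputable def nNum (d₀ d₁ : ℕ) (s x : ℝ) : ℝ := -2 * x ^ 3 * nBracket d₀ d₁ s x

/-- for `x ∈ (-1,1)`, `x ≠ 0` and `s ≤ 3` if `x > 0`, `s ≥ -3` if `x < 0`,
we have `d(x) > 0`, `n(s,x) ≠ 0`, indeed `n(s,x)` has the opposite sign to `x³`
(equivalently the bracketed expression is positive). -/
theorem stmt12 (d₀ d₁ : ℕ) (x : ℝ) (hx : x ∈ Set.Ioo (-1:ℝ) 1) (hx0 : x ≠ 0)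
    (s : ℝ) (hs₁ : 0 < x → s ≤ 3) (hs₂ : x < 0 → -3 ≤ s) :
    0 < dDen d₀ d₁ x ∧ nNum d₀ d₁ s x ≠ 0 ∧ nNum d₀ d₁ s x * x ^ 3 < 0 ∧
      0 < nBracket d₀ d₁ s x := by
  obtain ⟨hxl, hxr⟩ := hx
  have h1 : (0:ℝ) < 1 - x := by linarith
  have h2 : (0:ℝ) < 1 + x := by linarith
  have hd0 : (0:ℝ) ≤ (d₀:ℝ) := Nat.cast_nonneg _
  have hd1 : (0:ℝ) ≤ (d₁:ℝ) := Nat.cast_nonneg _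
  have hsx : s * x < 3 := by
    rcases lt_or_gt_of_ne hx0 with h | h
    · have hs := hs₂ h; nlinarith
    · have hs := hs₁ h; nlinarith
  have hsx3 : s * x * (3 - x ^ 2) < 6 := by
    have hx2 : (0:ℝ) < 3 - x ^ 2 := by nlinarith
    rcases lt_or_gt_of_ne hx0 with h | h
    · have hs := hs₂ h
      have key : s * x ≤ 3 * (-x) := by nlinarith
      nlinarith [mul_pos (mul_pos h2 h2) h1, mul_le_mul_of_nonneg_right key hx2.le]
    · have hs := hs₁ h
      have key : s * x ≤ 3 * x := by nlinarith
      nlinarith [mul_pos (mul_pos h1 h1) h2, mul_le_mul_of_nonneg_right key hx2.le]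
  have h3 : (0:ℝ) < 3 - s * x := by linarith
  have h9 : (0:ℝ) < 9 - s * x := by linarith
  have hT1 : (0:ℝ) < 6 - 3 * s * x + s * x ^ 3 := by nlinarith
  have hT0 : (0:ℝ) ≤ (d₀:ℝ) * (1 + x) * ((5 - x) * (1 + x) + (7 - x) * (3 - s * x)) := by
    apply mul_nonneg (mul_nonneg hd0 h2.le)
    have a1 : (0:ℝ) < (5 - x) * (1 + x) := mul_pos (by linarith) h2
    have a2 : (0:ℝ) < (7 - x) * (3 - s * x) := mul_pos (by linarith) h3
    linarith
  have hT0' : (0:ℝ) ≤ (d₁:ℝ) * (1 - x) * ((5 + x) * (1 - x) + (7 + x) * (3 - s * x)) := by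
    apply mul_nonneg (mul_nonneg hd1 h1.le)
    have a1 : (0:ℝ) < (5 + x) * (1 - x) := mul_pos (by linarith) h1
    have a2 : (0:ℝ) < (7 + x) * (3 - s * x) := mul_pos (by linarith) h3
    linarith
  have hABn : (0:ℝ) ≤ (d₀:ℝ) * (1 + x) + (d₁:ℝ) * (1 - x) :=
    add_nonneg (mul_nonneg hd0 h2.le) (mul_nonneg hd1 h1.le)
  have hbr : 0 < nBracket d₀ d₁ s x := by
    unfold nBracket
    have h4 : (0:ℝ) ≤ (9 - s * x) * ((d₀:ℝ) * (1 + x) + (d₁:ℝ) * (1 - x)) ^ 2 :=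
      mul_nonneg h9.le (sq_nonneg _)
    have h5 : (0:ℝ) ≤ ((d₀:ℝ) * (1 + x) + (d₁:ℝ) * (1 - x)) ^ 3 := pow_nonneg hABn 3
    linarith
  have hd1p : (0:ℝ) < 1 + (d₁:ℝ) := by positivity
  have hden : 0 < dDen d₀ d₁ x := by
    unfold dDen
    have t1 : (0:ℝ) < (1 + (d₁:ℝ)) * (2 + (d₁:ℝ)) ^ 2 * (3 + (d₁:ℝ)) * (1 - x) ^ 4 := by
      apply mul_pos (by positivity) (pow_pos h1 4)
    have t2 : (0:ℝ) < 4 * (2 + (d₀:ℝ)) * (1 + (d₁:ℝ)) * (2 + (d₁:ℝ)) * (3 + (d₁:ℝ)) *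
        (1 - x) ^ 3 * (1 + x) := by
      apply mul_pos (mul_pos (by positivity) (pow_pos h1 3)) h2
    have t3 : (0:ℝ) < 6 * (2 + (d₀:ℝ)) * (2 + (d₁:ℝ)) *
        (4 + (d₀:ℝ) + (d₁:ℝ) + (1 + (d₀:ℝ)) * (1 + (d₁:ℝ))) * (1 - x) ^ 2 * (1 + x) ^ 2 := by
      apply mul_pos (mul_pos (by positivity) (pow_pos h1 2)) (pow_pos h2 2)
    have t4 : (0:ℝ) < 4 * (1 + (d₀:ℝ)) * (2 + (d₀:ℝ)) * (3 + (d₀:ℝ)) * (2 + (d₁:ℝ)) *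
        (1 - x) * (1 + x) ^ 3 := by
      apply mul_pos (mul_pos (by positivity) h1) (pow_pos h2 3)
    have t5 : (0:ℝ) < (1 + (d₀:ℝ)) * (2 + (d₀:ℝ)) ^ 2 * (3 + (d₀:ℝ)) * (1 + x) ^ 4 := by
      apply mul_pos (by positivity) (pow_pos h2 4)
    linarith
  have hneg : nNum d₀ d₁ s x * x ^ 3 < 0 := by
    unfold nNum
    have hx6 : (0:ℝ) < x ^ 3 * x ^ 3 := by
      have h' : x ^ 3 ≠ 0 := pow_ne_zero 3 hx0
      rcases h'.lt_or_gt with h | h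
      · exact mul_pos_of_neg_of_neg h h
      · exact mul_pos h h
    nlinarith [mul_pos hx6 hbr]
  refine ⟨hden, ?_, hneg, hbr⟩
  intro h
  rw [h, zero_mul] at hneg
  exact lt_irrefl 0 hneg
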